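/- Let G be a group with descending q-central sequence G^(1) = G, G^(i+1) = (G^(i))^q [G^(i), G]. Then [G,G] ∩ G^(3) = [[G,G],G] · ([G,G] ∩ G^(q²)) · [G,G]^q, where G^(q²) is the subgroup generated by q²-th powers. -/

import Mathlib

/-!
Put `N = [[G,G],G] · [G,G]^q` and `M = N · G^(q²)`. In `G/M` commutators are central of
exponent `q` and every element has order dividing `q²`; since then `[a^q, g] = [a, g]^q = 1`
and `(a^q)^q = 1`, the generators of `G^(2) = G^q [G,G]` are central of exponent `q`, so `G^(3)`
vanishes in `G/M`, i.e. `G^(3) ≤ M`. As `N ≤ [G,G]` is normal, Dedekind's modular law gives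
`[G,G] ∩ M = N · ([G,G] ∩ G^(q²))`. The reverse inclusion holds generator by generator.
-/

/-- The commutator convention of the paper: `[x,y] = x⁻¹y⁻¹xy`. -/
def pComm {G : Type*} [Group G] (x y : G) : G := x⁻¹ * y⁻¹ * x * y

/-- The subgroup generated by `q`-th powers of elements of `H`. -/
def qPow {G : Type*} [Group G] (q : ℕ) (H : Subgroup G) : Subgroup G :=
  Subgroup.closure {x : G | ∃ h ∈ H, x = h ^ q}

/-- `H^q [H,G]`: the subgroup generated by `q`-th powers of elements of `H`
together with all commutators `[h,g]`, `h ∈ H`, `g ∈ G`. -/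
def qVerbal {G : Type*} [Group G] (q : ℕ) (H : Subgroup G) : Subgroup G :=
  Subgroup.closure ({x : G | ∃ h ∈ H, x = h ^ q} ∪
    {x : G | ∃ h ∈ H, ∃ g : G, x = pComm h g})

/-- The descending q-central sequence; `qcs q G i` is `G^(i+1)` in the paper's
(1-based) notation, i.e. `qcs q G 0 = G` and `qcs q G (i+1) = (G^(i+1))^q [G^(i+1), G]`. -/
def qcs (q : ℕ) (G : Type*) [Group G] : ℕ → Subgroup G
  | 0 => ⊤
  | i + 1 => qVerbal q (qcs q G i)

theorem qVerbal_normal {G : Type*} [Group G] (q : ℕ) {H : Subgroup G} (hH : H.Normal) :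
    (qVerbal q H).Normal := by
  constructor
  intro n hn g
  set S : Set G := {x : G | ∃ h ∈ H, x = h ^ q} ∪ {x : G | ∃ h ∈ H, ∃ g : G, x = pComm h g} with hS
  have himg : (MulAut.conj g) '' S ⊆ (Subgroup.closure S : Set G) := by
    rintro _ ⟨x, hx, rfl⟩
    rcases hx with ⟨h, hh, rfl⟩ | ⟨h, hh, g', rfl⟩
    · have : (MulAut.conj g) (h ^ q) = (g * h * g⁻¹) ^ q := by
        simp [MulAut.conj_apply, conj_pow]
      rw [this]
      exact Subgroup.subset_closure (Or.inl ⟨g * h * g⁻¹, hH.conj_mem h hh g, rfl⟩)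
    · have : (MulAut.conj g) (pComm h g') = pComm (g * h * g⁻¹) (g * g' * g⁻¹) := by
        simp only [MulAut.conj_apply, pComm]
        group
      rw [this]
      exact Subgroup.subset_closure
        (Or.inr ⟨g * h * g⁻¹, hH.conj_mem h hh g, g * g' * g⁻¹, rfl⟩)
  have h1 : (Subgroup.closure S).map (MulAut.conj g).toMonoidHom ≤ Subgroup.closure S := by
    rw [MonoidHom.map_closure]
    exact (Subgroup.closure_le _).2 himg
  exact h1 ⟨n, hn, by simp [MulAut.conj_apply]⟩

instance qcs_normal (q : ℕ) (G : Type*) [Group G] (i : ℕ) : (qcs q G i).Normal := by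
  induction i with
  | zero => exact ⟨fun n _ g => Subgroup.mem_top _⟩
  | succ i ih => exact qVerbal_normal q ih

open Subgroup

theorem Subgroup.sup_inf_assoc_of_le_of_normal {G : Type*} [Group G] {N : Subgroup G} [N.Normal]
    (H : Subgroup G) {K : Subgroup G} (hNK : N ≤ K) : (N ⊔ H) ⊓ K = N ⊔ H ⊓ K :=
  SetLike.coe_injective <| by
    rw [coe_inf, normal_mul, normal_mul, mul_inf_assoc _ _ _ hNK]

section pComm

variable {G H : Type*} [Group G] [Group H]

open scoped commutatorElement

theorem pComm_eq_commutatorElement (x y : G) : pComm x y = ⁅x⁻¹, y⁻¹⁆ := by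
  simp [pComm, commutatorElement_def]

theorem commutatorElement_eq_pComm (x y : G) : ⁅x, y⁆ = pComm x⁻¹ y⁻¹ := by
  simp [pComm_eq_commutatorElement]

theorem pComm_eq_one_iff {x y : G} : pComm x y = 1 ↔ Commute x y := by
  rw [pComm_eq_commutatorElement, commutatorElement_eq_one_iff_commute, Commute.inv_inv_iff]

theorem pComm_mem_commutator (x y : G) : pComm x y ∈ commutator G := by
  rw [pComm_eq_commutatorElement, commutator_def]
  exact commutator_mem_commutator (mem_top _) (mem_top _)

theorem map_pComm (f : G →* H) (x y : G) : f (pComm x y) = pComm (f x) (f y) := by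
  simp [pComm]

theorem pComm_pow_left {a g : G} (h : Commute a (pComm a g)) (n : ℕ) :
    pComm (a ^ n) g = pComm a g ^ n := by
  have hconj : g⁻¹ * a * g = a * pComm a g := by simp only [pComm]; group
  calc pComm (a ^ n) g = (a ^ n)⁻¹ * (g⁻¹ * a * g⁻¹⁻¹) ^ n := by
        rw [conj_pow]; simp only [pComm, inv_inv, mul_assoc]
    _ = (a ^ n)⁻¹ * (a ^ n * pComm a g ^ n) := by rw [inv_inv, hconj, h.mul_pow]
    _ = pComm a g ^ n := by group

end pComm

section qPow

variable {G H : Type*} [Group G] [Group H] (m : ℕ)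

theorem qPow_le_self (K : Subgroup G) : qPow m K ≤ K :=
  (closure_le _).2 fun _ ⟨_, hh, hx⟩ => hx ▸ pow_mem hh m

theorem qPow_mono {K L : Subgroup G} (hKL : K ≤ L) : qPow m K ≤ qPow m L :=
  closure_mono fun _ ⟨h, hh, hx⟩ => ⟨h, hKL hh, hx⟩

theorem map_qPow (f : G →* H) (K : Subgroup G) : (qPow m K).map f = qPow m (K.map f) := by
  rw [qPow, qPow, MonoidHom.map_closure]
  congr 1
  ext x
  simp only [Set.mem_image, Set.mem_ofPred_eq, mem_map]
  constructor
  · rintro ⟨_, ⟨h, hh, rfl⟩, rfl⟩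
    exact ⟨f h, ⟨h, hh, rfl⟩, map_pow f h m⟩
  · rintro ⟨_, ⟨h, hh, rfl⟩, rfl⟩
    exact ⟨h ^ m, ⟨h, hh, rfl⟩, map_pow f h m⟩

instance qPow_normal (K : Subgroup G) [K.Normal] : (qPow m K).Normal :=
  normal_iff_map_conj_eq.2 fun g => by rw [map_qPow, Normal.map_conj_eq]

theorem qPow_le_qVerbal (K : Subgroup G) : qPow m K ≤ qVerbal m K :=
  closure_mono Set.subset_union_left

theorem qVerbal_mono {K L : Subgroup G} (hKL : K ≤ L) : qVerbal m K ≤ qVerbal m L :=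
  closure_mono <| Set.union_subset_union (fun _ ⟨h, hh, hx⟩ => ⟨h, hKL hh, hx⟩)
    fun _ ⟨h, hh, g, hx⟩ => ⟨h, hKL hh, g, hx⟩

theorem commutator_top_le_qVerbal (K : Subgroup G) : ⁅K, ⊤⁆ ≤ qVerbal m K :=
  commutator_le.2 fun h hh g _ => by
    rw [commutatorElement_eq_pComm]
    exact subset_closure (Or.inr ⟨h⁻¹, inv_mem hh, g⁻¹, rfl⟩)

theorem map_qVerbal_le (f : G →* H) (K : Subgroup G) :
    (qVerbal m K).map f ≤ qVerbal m (K.map f) := by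
  rw [qVerbal, MonoidHom.map_closure, closure_le]
  rintro _ ⟨_, ⟨h, hh, rfl⟩ | ⟨h, hh, g, rfl⟩, rfl⟩
  · exact subset_closure (Or.inl ⟨f h, mem_map_of_mem f hh, map_pow f h m⟩)
  · exact subset_closure (Or.inr ⟨f h, mem_map_of_mem f hh, f g, map_pComm f h g⟩)

end qPow

section qcs

variable {G H : Type*} [Group G] [Group H] {q : ℕ}

open scoped commutatorElement

theorem map_qcs_le (f : G →* H) (i : ℕ) : (qcs q G i).map f ≤ qcs q H i := by
  induction i with
  | zero => exact le_top
  | succ i ih => exact (map_qVerbal_le q f _).trans (qVerbal_mono q ih)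

theorem lowerCentralSeries_le_qcs (i : ℕ) : (⊤ : Subgroup G).lowerCentralSeries i ≤ qcs q G i := by
  induction i with
  | zero => exact le_rfl
  | succ i ih => exact (commutator_mono ih le_rfl).trans (commutator_top_le_qVerbal q _)

theorem qPow_sq_le_qcs_two : qPow (q ^ 2) (⊤ : Subgroup G) ≤ qcs q G 2 :=
  (closure_le _).2 fun _ ⟨h, _, hx⟩ => by
    rw [hx, sq, pow_mul]
    exact subset_closure (Or.inl ⟨h ^ q, subset_closure (Or.inl ⟨h, mem_top h, rfl⟩), rfl⟩)

theorem qPow_commutator_le_qcs_two : qPow q (commutator G) ≤ qcs q G 2 :=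
  (qPow_mono q (lowerCentralSeries_le_qcs 1)).trans (qPow_le_qVerbal q _)

theorem qcs_two_eq_bot (hcen : ∀ x y : G, pComm x y ∈ center G)
    (hexp : ∀ x y : G, pComm x y ^ q = 1) (hsq : ∀ x : G, x ^ (q ^ 2) = 1) :
    qcs q G 2 = ⊥ := by
  have hle : qcs q G 1 ≤ center G := by
    refine (closure_le _).2 ?_
    rintro _ (⟨a, -, rfl⟩ | ⟨a, -, g, rfl⟩)
    · refine mem_center_iff.2 fun g => (pComm_eq_one_iff.1 ?_).symm
      rw [pComm_pow_left (mem_center_iff.1 (hcen a g) a), hexp]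
    · exact hcen a g
  have hpow : ∀ h ∈ qcs q G 1, h ^ q = 1 := by
    intro h hh
    induction hh using closure_induction with
    | mem x hx =>
      rcases hx with ⟨a, -, rfl⟩ | ⟨a, -, g, rfl⟩
      · rw [← pow_mul, ← sq, hsq]
      · exact hexp a g
    | one => exact one_pow q
    | mul x y hx _ ihx ihy =>
      rw [(show Commute y x from mem_center_iff.1 (hle hx) y).symm.mul_pow, ihx, ihy, one_mul]
    | inv x _ ihx => rw [inv_pow, ihx, inv_one]
  refine eq_bot_iff.2 <| (closure_le _).2 ?_
  rintro _ (⟨h, hh, rfl⟩ | ⟨h, hh, g, rfl⟩)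
  · exact hpow h hh
  · exact pComm_eq_one_iff.2 (show Commute g h from mem_center_iff.1 (hle hh) g).symm

theorem qcs_two_le_ker (f : G →* H) (hf : Function.Surjective f)
    (hlcs : (⊤ : Subgroup G).lowerCentralSeries 2 ≤ f.ker) (hcomm : qPow q (commutator G) ≤ f.ker)
    (hsq : qPow (q ^ 2) (⊤ : Subgroup G) ≤ f.ker) : qcs q G 2 ≤ f.ker := by
  have hquot : qcs q H 2 = ⊥ := by
    refine qcs_two_eq_bot (fun x y => ?_) (fun x y => ?_) (fun x => ?_)
    · obtain ⟨⟨a, rfl⟩, ⟨b, rfl⟩⟩ := And.intro (hf x) (hf y)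
      refine mem_center_iff.2 fun z => ?_
      obtain ⟨g, rfl⟩ := hf z
      have hc : ⁅pComm a b, g⁆ ∈ f.ker :=
        hlcs (commutator_mem_commutator (pComm_mem_commutator a b) (mem_top g))
      rw [MonoidHom.mem_ker, map_commutatorElement, commutatorElement_eq_one_iff_commute,
        map_pComm] at hc
      exact hc.symm
    · obtain ⟨⟨a, rfl⟩, ⟨b, rfl⟩⟩ := And.intro (hf x) (hf y)
      rw [← map_pComm, ← map_pow, ← MonoidHom.mem_ker]
      exact hcomm (subset_closure ⟨_, pComm_mem_commutator a b, rfl⟩)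
    · obtain ⟨a, rfl⟩ := hf x
      rw [← map_pow, ← MonoidHom.mem_ker]
      exact hsq (subset_closure ⟨a, mem_top a, rfl⟩)
  rw [← MonoidHom.comap_bot]
  exact map_le_iff_le_comap.1 ((map_qcs_le f 2).trans hquot.le)

end qcs

theorem commutator_inf_qcs3_general {G : Type*} [Group G] (q : ℕ) :
    commutator G ⊓ qcs q G 2 =
      Subgroup.lowerCentralSeries (⊤ : Subgroup G) 2 ⊔ (commutator G ⊓ qPow (q ^ 2) ⊤) ⊔ qPow q (commutator G) := by
  have hlcs : (⊤ : Subgroup G).lowerCentralSeries 2 ≤ commutator G :=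
    Subgroup.lowerCentralSeries_antitone ⊤ (by norm_num : 1 ≤ 2)
  set N := (⊤ : Subgroup G).lowerCentralSeries 2 ⊔ qPow q (commutator G)
  set M := N ⊔ qPow (q ^ 2) ⊤
  have hM : qcs q G 2 ≤ M := by
    have h := qcs_two_le_ker (q := q) (QuotientGroup.mk' M) (QuotientGroup.mk'_surjective M)
    rw [QuotientGroup.ker_mk'] at h
    exact h (le_sup_left.trans le_sup_left) (le_sup_right.trans le_sup_left) le_sup_right
  refine le_antisymm ?_ ?_
  · calc commutator G ⊓ qcs q G 2 ≤ commutator G ⊓ M := inf_le_inf_left _ hM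
      _ = N ⊔ commutator G ⊓ qPow (q ^ 2) ⊤ := by
          rw [inf_comm, sup_inf_assoc_of_le_of_normal _ (sup_le hlcs (qPow_le_self q _)), inf_comm]
      _ = _ := sup_right_comm _ _ _
  · refine sup_le (sup_le ?_ ?_) ?_
    · exact le_inf hlcs (lowerCentralSeries_le_qcs 2)
    · exact inf_le_inf_left _ qPow_sq_le_qcs_two
    · exact le_inf (qPow_le_self q _) qPow_commutator_le_qcs_two

/-- For a group `G` and a prime power `q = p^d` (`d ≥ 1`), with the descending
q-central sequence `G^(1) = G`, `G^(i+1) = (G^(i))^q [G^(i), G]`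
(here `qcs q G i = G^(i+1)`, so `G^(3) = qcs q G 2`), one has
`[G,G] ∩ G^(3) = [[G,G],G] ⬝ ([G,G] ∩ G^(q²)) ⬝ [G,G]^q`,
where `G^(q²)` is the subgroup generated by the `q²`-th powers. -/
theorem commutator_inf_qcs3 {G : Type*} [Group G] (p d q : ℕ) (hp : p.Prime)
    (hd : 1 ≤ d) (hq : q = p ^ d) :
    commutator G ⊓ qcs q G 2 =
      Subgroup.lowerCentralSeries (⊤ : Subgroup G) 2 ⊔ (commutator G ⊓ qPow (q ^ 2) ⊤) ⊔ qPow q (commutator G) :=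
  commutator_inf_qcs3_general q
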